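/- Let D be a minimal (2,2) digraph realizing its CCE graph G. Then any two distinct vertices of D have at most one common prey and at most one common predator. -/

import Mathlib

/-!
If `u ≠ v` had two common prey `x ≠ y`, the arc `v → y` could be deleted without changing the
CCE graph: by the degree bounds, the in-neighbours of `y` are exactly `u, v` and the
out-neighbours of `v` are exactly `x, y`, so the only common prey the arc provides (`y` for
`u, v`) is replaced by `x`, and the only common predator it provides (`v` for `x, y`) is
replaced by `u`. This contradicts minimality. Common predators are common prey of the
reversed digraph, which is again minimal.
-/

open SimpleGraph

/-- A simple digraph given by its arc relation `A` has no loops, and every vertex has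
outdegree at most 2 and indegree at most 2. -/
def IsTwoTwo {V : Type*} (A : V → V → Prop) : Prop :=
  (∀ v, ¬ A v v) ∧
  (∀ v a b c, A v a → A v b → A v c → a = b ∨ a = c ∨ b = c) ∧
  (∀ v a b c, A a v → A b v → A c v → a = b ∨ a = c ∨ b = c)

/-- The competition-common enemy graph of a digraph with arc relation `A`. -/
def CCE {V : Type*} (A : V → V → Prop) : SimpleGraph V where
  Adj u v := u ≠ v ∧ (∃ x, A u x ∧ A v x) ∧ (∃ y, A y u ∧ A y v)
  symm := ⟨by
    rintro u v ⟨h, ⟨x, hx1, hx2⟩, ⟨y, hy1, hy2⟩⟩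
    exact ⟨h.symm, ⟨x, hx2, hx1⟩, ⟨y, hy2, hy1⟩⟩⟩
  loopless := ⟨fun v h => h.1 rfl⟩

/-- The connected component `c` of `G` induces a (finite) path graph. -/
def IsPathComponent {V : Type*} (G : SimpleGraph V) (c : G.ConnectedComponent) : Prop :=
  ∃ n : ℕ, Nonempty ((G.induce c.supp) ≃g pathGraph n)

/-- The connected component `c` of `G` induces a cycle of length at least 3. -/
def IsCycleComponent {V : Type*} (G : SimpleGraph V) (c : G.ConnectedComponent) : Prop :=
  ∃ n : ℕ, 3 ≤ n ∧ Nonempty ((G.induce c.supp) ≃g cycleGraph n)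

/-- `G` is the CCE graph of some `⟨2,2⟩` digraph. -/
def IsTwoTwoCCE {V : Type*} (G : SimpleGraph V) : Prop :=
  ∃ (W : Type) (A : W → W → Prop), IsTwoTwo A ∧ Nonempty (G ≃g CCE A)

/-- `A` is acyclic: it has no directed cycle. -/
def DigraphAcyclic {V : Type*} (A : V → V → Prop) : Prop :=
  ∀ v, ¬ Relation.TransGen A v v

/-- A `(2,2)` digraph: an acyclic `⟨2,2⟩` digraph. -/
def IsTwoTwoAcyclic {V : Type*} (A : V → V → Prop) : Prop :=
  IsTwoTwo A ∧ DigraphAcyclic A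

/-- `G` is an interval graph. -/
def IsIntervalGraph {V : Type*} (G : SimpleGraph V) : Prop :=
  ∃ f : V → Set ℝ, (∀ v, ∃ a b : ℝ, f v = Set.Icc a b) ∧
    ∀ u v, u ≠ v → (G.Adj u v ↔ (f u ∩ f v).Nonempty)

/-- `A` is a minimal `(2,2)` digraph realizing its CCE graph: no proper subdigraph on the
same vertex set has the same CCE graph. -/
def MinimalTwoTwoAcyclic {V : Type*} (A : V → V → Prop) : Prop :=
  IsTwoTwoAcyclic A ∧
    ∀ A' : V → V → Prop, (∀ u v, A' u v → A u v) → CCE A' = CCE A → ∀ u v, A u v → A' u v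

section

variable {V : Type*}

def deleteArc (A : V → V → Prop) (s t : V) : V → V → Prop :=
  fun a b => A a b ∧ ¬(a = s ∧ b = t)

lemma cce_flip (A : V → V → Prop) : CCE (flip A) = CCE A := by
  ext a b
  exact ⟨fun ⟨h, hx, hy⟩ => ⟨h, hy, hx⟩, fun ⟨h, hx, hy⟩ => ⟨h, hy, hx⟩⟩

lemma IsTwoTwo.flip {A : V → V → Prop} (hA : IsTwoTwo A) : IsTwoTwo (flip A) :=
  ⟨hA.1, hA.2.2, hA.2.1⟩

lemma DigraphAcyclic.flip {A : V → V → Prop} (hA : DigraphAcyclic A) :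
    DigraphAcyclic (flip A) :=
  fun v hv => hA v (Relation.transGen_swap.mp hv)

lemma MinimalTwoTwoAcyclic.flip {A : V → V → Prop} (hA : MinimalTwoTwoAcyclic A) :
    MinimalTwoTwoAcyclic (flip A) := by
  obtain ⟨⟨hTT, hac⟩, hmin⟩ := hA
  refine ⟨⟨hTT.flip, hac.flip⟩, fun A' hsub hcce a b hab => ?_⟩
  exact hmin (Function.swap A') (fun p q h => hsub q p h)
    ((cce_flip A').trans (hcce.trans (cce_flip A))) b a hab

lemma IsTwoTwo.inNeighbor_eq_or_eq {A : V → V → Prop} (hA : IsTwoTwo A) {u v y b : V}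
    (huv : u ≠ v) (hu : A u y) (hv : A v y) (hb : A b y) : b = u ∨ b = v := by
  rcases hA.2.2 y u v b hu hv hb with h | h | h
  exacts [absurd h huv, Or.inl h.symm, Or.inr h.symm]

lemma exists_common_out_deleteArc {A : V → V → Prop} {u v x y : V}
    (hin : ∀ b, A b y → b = u ∨ b = v) (hux : A u x) (hvx : A v x) (huv : u ≠ v) (hxy : x ≠ y)
    {a b p : V} (hab : a ≠ b) (hap : A a p) (hbp : A b p) :
    ∃ q, deleteArc A v y a q ∧ deleteArc A v y b q := by
  have hvx' : deleteArc A v y v x := ⟨hvx, fun h => hxy h.2⟩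
  have hux' : deleteArc A v y u x := ⟨hux, fun h => huv h.1⟩
  by_cases ha : a = v ∧ p = y
  · obtain ⟨rfl, rfl⟩ := ha
    obtain rfl : b = u := (hin b hbp).resolve_right hab.symm
    exact ⟨x, hvx', hux'⟩
  by_cases hb : b = v ∧ p = y
  · obtain ⟨rfl, rfl⟩ := hb
    obtain rfl : a = u := (hin a hap).resolve_right hab
    exact ⟨x, hux', hvx'⟩
  exact ⟨p, ⟨hap, ha⟩, ⟨hbp, hb⟩⟩

lemma cce_deleteArc_eq {A : V → V → Prop} {u v x y : V}
    (hin : ∀ b, A b y → b = u ∨ b = v) (hout : ∀ b, A v b → b = x ∨ b = y)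
    (hux : A u x) (hvx : A v x) (huy : A u y) (huv : u ≠ v) (hxy : x ≠ y) :
    CCE (deleteArc A v y) = CCE A := by
  ext a b
  refine ⟨fun ⟨h, ⟨p, hap, hbp⟩, ⟨q, hqa, hqb⟩⟩ => ⟨h, ⟨p, hap.1, hbp.1⟩, ⟨q, hqa.1, hqb.1⟩⟩, ?_⟩
  rintro ⟨hab, ⟨p, hap, hbp⟩, ⟨q, hqa, hqb⟩⟩
  refine ⟨hab, exists_common_out_deleteArc hin hux hvx huv hxy hab hap hbp, ?_⟩
  obtain ⟨r, hra, hrb⟩ := exists_common_out_deleteArc (A := flip A) hout hux huy hxy huv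
    hab hqa hqb
  exact ⟨r, ⟨hra.1, fun h => hra.2 ⟨h.2, h.1⟩⟩, ⟨hrb.1, fun h => hrb.2 ⟨h.2, h.1⟩⟩⟩

lemma MinimalTwoTwoAcyclic.eq_of_common_out {A : V → V → Prop} (hA : MinimalTwoTwoAcyclic A)
    {u v x y : V} (huv : u ≠ v) (hux : A u x) (hvx : A v x) (huy : A u y) (hvy : A v y) :
    x = y := by
  by_contra hxy
  have hTT : IsTwoTwo A := hA.1.1
  have hcce := cce_deleteArc_eq (fun b hb => hTT.inNeighbor_eq_or_eq huv huy hvy hb)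
    (fun b hb => hTT.flip.inNeighbor_eq_or_eq hxy hvx hvy hb) hux hvx huy huv hxy
  exact (hA.2 _ (fun _ _ h => h.1) hcce v y hvy).2 ⟨rfl, rfl⟩

end

theorem stmt16 {V : Type*} (A : V → V → Prop) (hA : MinimalTwoTwoAcyclic A)
    (u v : V) (huv : u ≠ v) :
    (∀ x y, A u x → A v x → A u y → A v y → x = y) ∧
    (∀ x y, A x u → A x v → A y u → A y v → x = y) :=
  ⟨fun _ _ => hA.eq_of_common_out huv, fun _ _ => hA.flip.eq_of_common_out huv⟩
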